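/- With the same setup (X = {xⁿ = y^{n+1}} ⊆ ℂ², b = n/(n+1), f : S¹ → X ∩ S³ a λ-bi-Lipschitz homeomorphism with inverse g), the map G : X ∩ B̄ → ℂ defined by G(t·x, t^b·y) = t·g(x,y) for (x,y) ∈ X ∩ S³ and t ∈ [0,1] is Lipschitz with constant (λ+1)(1+√2). -/

import Mathlib

open Set Metric

/-- A point `(a, b)` of Euclidean `ℂ²`. -/
noncomputable def pt2 (a b : ℂ) : EuclideanSpace ℂ (Fin 2) := WithLp.toLp 2 ![a, b]

/-!
Write `w = (t x, t^b y)` with `(x, y) ∈ X ∩ S³` and `v = g (x, y)`. For `t ≤ s`,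
`t v₁ - s v₂ = t (v₁ - v₂) - (s - t) v₂`, so it suffices to bound `t ‖p₁ - p₂‖` and `s - t` by
multiples of `‖w₁ - w₂‖`. Both bounds hold because `X ∩ S³` lies on a single torus
`|x| = c, |y| = d` with `c ≥ 1/2`: for `u, v` on a circle and `0 ≤ t ≤ s`,
`t |u - v| ≤ |t u - s v|` (used in the second factor with `t ≤ t^b ≤ s^b`), and
`(s - t) c ≤ |t x₁ - s x₂|`. This gives the constant `λ + 2 ≤ (λ + 1)(1 + √2)`.
-/

lemma radius_eq_of_pow_eq_pow_succ {n : ℕ} (hn : n ≠ 0) {r₁ q₁ r₂ q₂ : ℝ}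
    (hr₁ : 0 ≤ r₁) (hq₁ : 0 ≤ q₁) (hr₂ : 0 ≤ r₂) (hq₂ : 0 ≤ q₂)
    (h₁ : r₁ ^ n = q₁ ^ (n + 1)) (h₂ : r₂ ^ n = q₂ ^ (n + 1))
    (e₁ : r₁ ^ 2 + q₁ ^ 2 = 1) (e₂ : r₂ ^ 2 + q₂ ^ 2 = 1) : r₁ = r₂ := by
  by_contra hne
  wlog hlt : r₁ < r₂ generalizing r₁ q₁ r₂ q₂
  · exact this hr₂ hq₂ hr₁ hq₁ h₂ h₁ e₂ e₁ (Ne.symm hne)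
      (lt_of_le_of_ne (not_lt.1 hlt) (Ne.symm hne))
  have hq : q₁ < q₂ :=
    lt_of_pow_lt_pow_left₀ (n + 1) hq₂ (h₁ ▸ h₂ ▸ pow_lt_pow_left₀ hlt hr₁ hn)
  nlinarith

lemma half_le_radius_of_pow_eq_pow_succ {n : ℕ} (hn : n ≠ 0) {r q : ℝ} (hr : 0 ≤ r)
    (hq : 0 ≤ q) (h : r ^ n = q ^ (n + 1)) (e : r ^ 2 + q ^ 2 = 1) : 1 / 2 ≤ r := by
  obtain ⟨m, rfl⟩ : ∃ m, n = m + 1 := ⟨n - 1, by omega⟩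
  have hq1 : q ≤ 1 := by nlinarith
  have hrq : r ≤ q := by
    by_contra! hqr
    have : q ^ (m + 2) ≤ q ^ (m + 1) := pow_le_pow_of_le_one hq hq1 (by omega)
    have : q ^ (m + 1) < r ^ (m + 1) := pow_lt_pow_left₀ hqr hq m.succ_ne_zero
    linarith
  -- `q ^ (m + 2) = r ^ (m + 1) ≤ r q ^ m`, so `q ^ 2 ≤ r`, i.e. `1 - r ^ 2 ≤ r`.
  have hqm : 0 < q ^ m := pow_pos (lt_of_le_of_ne hq fun h0 => by subst h0; nlinarith) m
  have hrm : r ^ m ≤ q ^ m := pow_le_pow_left₀ hr hrq m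
  have hq2r : q ^ 2 ≤ r := by
    have : q ^ 2 * q ^ m ≤ r * q ^ m := by
      calc q ^ 2 * q ^ m = r * r ^ m := by rw [← pow_add, ← pow_succ']; linear_combination -h
        _ ≤ r * q ^ m := mul_le_mul_of_nonneg_left hrm hr
    exact le_of_mul_le_mul_right this hqm
  nlinarith

lemma mul_norm_sub_le_norm_smul_sub_smul {E : Type*} [SeminormedAddCommGroup E]
    [InnerProductSpace ℝ E] {u v : E} (huv : ‖u‖ = ‖v‖) {t s : ℝ} (ht : 0 ≤ t) (hts : t ≤ s) :
    t * ‖u - v‖ ≤ ‖t • u - s • v‖ := by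
  apply le_of_pow_le_pow_left₀ two_ne_zero (norm_nonneg _)
  have hinner : inner ℝ u v ≤ ‖v‖ ^ 2 := (real_inner_le_norm u v).trans_eq (by rw [huv, sq])
  rw [mul_pow, norm_sub_sq_real, norm_sub_sq_real, norm_smul, norm_smul, real_inner_smul_left,
    real_inner_smul_right, Real.norm_of_nonneg ht, Real.norm_of_nonneg (ht.trans hts), huv]
  -- the difference of the two sides is `(s - t) ((s + t) ‖v‖² - 2 t ⟪u, v⟫) ≥ (s - t)² ‖v‖²`
  nlinarith [mul_nonneg (mul_nonneg ht (sub_nonneg.2 hts)) (sub_nonneg.2 hinner),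
    mul_nonneg (sq_nonneg (s - t)) (sq_nonneg ‖v‖)]

lemma norm_smul_sub_smul_le {E : Type*} [SeminormedAddCommGroup E] [NormedSpace ℝ E]
    (v₁ v₂ : E) {t s : ℝ} (ht : 0 ≤ t) (hts : t ≤ s) :
    ‖t • v₁ - s • v₂‖ ≤ t * ‖v₁ - v₂‖ + (s - t) * ‖v₂‖ := by
  calc ‖t • v₁ - s • v₂‖ = ‖t • (v₁ - v₂) - (s - t) • v₂‖ := by
        rw [smul_sub, sub_smul]; abel_nf
    _ ≤ ‖t • (v₁ - v₂)‖ + ‖(s - t) • v₂‖ := norm_sub_le _ _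
    _ = t * ‖v₁ - v₂‖ + (s - t) * ‖v₂‖ := by
        rw [norm_smul, norm_smul, Real.norm_of_nonneg ht, Real.norm_of_nonneg (sub_nonneg.2 hts)]

lemma lipschitzOn_inv_of_bijOn {E F : Type*} [SeminormedAddCommGroup E]
    [SeminormedAddCommGroup F] {f : E → F} {g : F → E} {S : Set E} {T : Set F} {lam : ℝ}
    (hlam : 0 < lam) (hbij : BijOn f S T)
    (hbil : ∀ v₁ ∈ S, ∀ v₂ ∈ S, lam⁻¹ * ‖v₁ - v₂‖ ≤ ‖f v₁ - f v₂‖)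
    (hg : ∀ v ∈ S, g (f v) = v) :
    ∀ ⦃p⦄, p ∈ T → ∀ ⦃q⦄, q ∈ T → ‖g p - g q‖ ≤ lam * ‖p - q‖ := by
  intro p hp q hq
  obtain ⟨v₁, hv₁, rfl⟩ := hbij.surjOn hp
  obtain ⟨v₂, hv₂, rfl⟩ := hbij.surjOn hq
  rw [hg v₁ hv₁, hg v₂ hv₂, ← inv_mul_le_iff₀ hlam]
  exact hbil v₁ hv₁ v₂ hv₂

lemma mapsTo_inv_of_bijOn {E F : Type*} {f : E → F} {g : F → E} {S : Set E} {T : Set F}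
    (hbij : BijOn f S T) (hg : ∀ v ∈ S, g (f v) = v) : MapsTo g T S := by
  rintro _ hp
  obtain ⟨v, hv, rfl⟩ := hbij.surjOn hp
  rwa [hg v hv]

lemma pt2_sub (a b a' b' : ℂ) : pt2 a b - pt2 a' b' = pt2 (a - a') (b - b') := by
  ext i; fin_cases i <;> simp [pt2]

lemma norm_pt2_sq (a b : ℂ) : ‖pt2 a b‖ ^ 2 = ‖a‖ ^ 2 + ‖b‖ ^ 2 := by
  rw [EuclideanSpace.norm_eq, Real.sq_sqrt (by positivity)]
  simp [pt2, Fin.sum_univ_two]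

lemma norm_le_norm_pt2 (a b : ℂ) : ‖a‖ ≤ ‖pt2 a b‖ := by
  simpa [pt2] using PiLp.norm_apply_le (pt2 a b) 0

lemma norms_of_mem_curve_sphere {n : ℕ} {x y : ℂ}
    (hX : pt2 x y ∈ {p : EuclideanSpace ℂ (Fin 2) | (p 0) ^ n = (p 1) ^ (n + 1)})
    (hS : ‖pt2 x y‖ = 1) : ‖x‖ ^ n = ‖y‖ ^ (n + 1) ∧ ‖x‖ ^ 2 + ‖y‖ ^ 2 = 1 := by
  have hxy : x ^ n = y ^ (n + 1) := by simpa [pt2] using hX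
  refine ⟨by rw [← norm_pow, ← norm_pow, hxy], ?_⟩
  rw [← norm_pt2_sq, hS, one_pow]

lemma mem_torus_of_mem_curve_sphere {n : ℕ} (hn : n ≠ 0) {x₁ y₁ x₂ y₂ : ℂ}
    (h₁ : pt2 x₁ y₁ ∈ {p : EuclideanSpace ℂ (Fin 2) | (p 0) ^ n = (p 1) ^ (n + 1)})
    (hS₁ : ‖pt2 x₁ y₁‖ = 1)
    (h₂ : pt2 x₂ y₂ ∈ {p : EuclideanSpace ℂ (Fin 2) | (p 0) ^ n = (p 1) ^ (n + 1)})
    (hS₂ : ‖pt2 x₂ y₂‖ = 1) : ‖x₁‖ = ‖x₂‖ ∧ ‖y₁‖ = ‖y₂‖ ∧ 1 / 2 ≤ ‖x₁‖ := by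
  obtain ⟨hc₁, he₁⟩ := norms_of_mem_curve_sphere h₁ hS₁
  obtain ⟨hc₂, he₂⟩ := norms_of_mem_curve_sphere h₂ hS₂
  have hx : ‖x₁‖ = ‖x₂‖ := radius_eq_of_pow_eq_pow_succ hn (norm_nonneg _) (norm_nonneg _)
    (norm_nonneg _) (norm_nonneg _) hc₁ hc₂ he₁ he₂
  refine ⟨hx, ?_, half_le_radius_of_pow_eq_pow_succ hn (norm_nonneg _) (norm_nonneg _) hc₁ he₁⟩
  rw [← Real.sqrt_sq (norm_nonneg y₁), ← Real.sqrt_sq (norm_nonneg y₂)]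
  rw [hx] at he₁
  congr 1
  linarith

section Torus

variable {x₁ y₁ x₂ y₂ : ℂ} {t s tb sb : ℝ}

lemma mul_norm_sub_le_norm_pt2_sub (hx : ‖x₁‖ = ‖x₂‖) (hy : ‖y₁‖ = ‖y₂‖) (ht : 0 ≤ t)
    (hts : t ≤ s) (htb : t ≤ tb) (htbsb : tb ≤ sb) :
    t * ‖pt2 x₁ y₁ - pt2 x₂ y₂‖ ≤ ‖pt2 (t * x₁) (tb * y₁) - pt2 (s * x₂) (sb * y₂)‖ := by
  apply le_of_pow_le_pow_left₀ two_ne_zero (norm_nonneg _)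
  rw [mul_pow, pt2_sub, pt2_sub, norm_pt2_sq, norm_pt2_sq]
  simp only [← Complex.real_smul]
  have hX := pow_le_pow_left₀ (mul_nonneg ht (norm_nonneg _))
    (mul_norm_sub_le_norm_smul_sub_smul hx ht hts) 2
  have hY := pow_le_pow_left₀ (mul_nonneg (ht.trans htb) (norm_nonneg _))
    (mul_norm_sub_le_norm_smul_sub_smul hy (ht.trans htb) htbsb) 2
  have hty : (t * ‖y₁ - y₂‖) ^ 2 ≤ (tb * ‖y₁ - y₂‖) ^ 2 :=
    pow_le_pow_left₀ (mul_nonneg ht (norm_nonneg _))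
      (mul_le_mul_of_nonneg_right htb (norm_nonneg _)) 2
  nlinarith

lemma sub_mul_norm_le_norm_pt2_sub (hx : ‖x₁‖ = ‖x₂‖) (ht : 0 ≤ t) (hs : 0 ≤ s) :
    (s - t) * ‖x₁‖ ≤ ‖pt2 (t * x₁) (tb * y₁) - pt2 (s * x₂) (sb * y₂)‖ := by
  calc (s - t) * ‖x₁‖ = ‖(s : ℂ) * x₂‖ - ‖(t : ℂ) * x₁‖ := by
        rw [norm_mul, norm_mul, Complex.norm_real, Complex.norm_real, Real.norm_of_nonneg ht,
          Real.norm_of_nonneg hs, hx]; ring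
    _ ≤ ‖(t : ℂ) * x₁ - (s : ℂ) * x₂‖ := by rw [norm_sub_rev]; exact norm_sub_norm_le _ _
    _ ≤ _ := by rw [pt2_sub]; exact norm_le_norm_pt2 _ _

lemma norm_smul_sub_smul_le_of_torus {v₁ v₂ : ℂ} {lam : ℝ} (hlam : 0 ≤ lam)
    (hx : ‖x₁‖ = ‖x₂‖) (hy : ‖y₁‖ = ‖y₂‖) (hx₁ : 1 / 2 ≤ ‖x₁‖) (hv₂ : ‖v₂‖ = 1)
    (hv : ‖v₁ - v₂‖ ≤ lam * ‖pt2 x₁ y₁ - pt2 x₂ y₂‖)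
    (ht : 0 ≤ t) (hts : t ≤ s) (htb : t ≤ tb) (htbsb : tb ≤ sb) :
    ‖t • v₁ - s • v₂‖ ≤ (lam + 2) * ‖pt2 (t * x₁) (tb * y₁) - pt2 (s * x₂) (sb * y₂)‖ := by
  calc ‖t • v₁ - s • v₂‖ ≤ t * ‖v₁ - v₂‖ + (s - t) * ‖v₂‖ := norm_smul_sub_smul_le v₁ v₂ ht hts
    _ ≤ lam * (t * ‖pt2 x₁ y₁ - pt2 x₂ y₂‖) + 2 * ((s - t) * ‖x₁‖) := by
        rw [hv₂]
        nlinarith [mul_le_mul_of_nonneg_left hv ht,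
          mul_le_mul_of_nonneg_left hx₁ (sub_nonneg.2 hts)]
    _ ≤ lam * ‖pt2 (t * x₁) (tb * y₁) - pt2 (s * x₂) (sb * y₂)‖
          + 2 * ‖pt2 (t * x₁) (tb * y₁) - pt2 (s * x₂) (sb * y₂)‖ := by
        gcongr
        · exact mul_norm_sub_le_norm_pt2_sub hx hy ht hts htb htbsb
        · exact sub_mul_norm_le_norm_pt2_sub hx ht (ht.trans hts)
    _ = _ := by ring

end Torus

theorem stmt_12_general (n : ℕ) (hn : 1 < n) (f₁ f₂ : ℂ → ℂ) (g : EuclideanSpace ℂ (Fin 2) → ℂ)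
    (lam : ℝ) (hlam : 1 ≤ lam)
    (hbij : Set.BijOn (fun v => pt2 (f₁ v) (f₂ v)) (Metric.sphere (0:ℂ) 1)
      ({p : EuclideanSpace ℂ (Fin 2) | (p 0) ^ n = (p 1) ^ (n + 1)} ∩
        Metric.sphere (0 : EuclideanSpace ℂ (Fin 2)) 1))
    (hbil : ∀ v₁ ∈ Metric.sphere (0:ℂ) 1, ∀ v₂ ∈ Metric.sphere (0:ℂ) 1,
      lam⁻¹ * ‖v₁ - v₂‖ ≤ ‖pt2 (f₁ v₁) (f₂ v₁) - pt2 (f₁ v₂) (f₂ v₂)‖ ∧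
      ‖pt2 (f₁ v₁) (f₂ v₁) - pt2 (f₁ v₂) (f₂ v₂)‖ ≤ lam * ‖v₁ - v₂‖)
    (hg : ∀ v ∈ Metric.sphere (0:ℂ) 1, g (pt2 (f₁ v) (f₂ v)) = v) :
    let b : ℝ := n / (n + 1)
    ∀ x₁ y₁ x₂ y₂ : ℂ, ∀ t s : ℝ,
      pt2 x₁ y₁ ∈ {p : EuclideanSpace ℂ (Fin 2) | (p 0) ^ n = (p 1) ^ (n + 1)} →
      ‖pt2 x₁ y₁‖ = 1 →
      pt2 x₂ y₂ ∈ {p : EuclideanSpace ℂ (Fin 2) | (p 0) ^ n = (p 1) ^ (n + 1)} →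
      ‖pt2 x₂ y₂‖ = 1 →
      0 ≤ t → t ≤ 1 → 0 ≤ s → s ≤ 1 →
      ‖t • g (pt2 x₁ y₁) - s • g (pt2 x₂ y₂)‖ ≤
        (lam + 1) * (1 + Real.sqrt 2) *
          ‖pt2 ((t : ℂ) * x₁) (((t ^ b : ℝ) : ℂ) * y₁) -
            pt2 ((s : ℂ) * x₂) (((s ^ b : ℝ) : ℂ) * y₂)‖ := by
  intro b x₁ y₁ x₂ y₂ t s h₁ hS₁ h₂ hS₂ ht0 ht1 hs0 hs1
  have hb1 : b ≤ 1 := div_le_one_of_le₀ (by linarith) (by positivity)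
  obtain ⟨hx, hy, hhalf⟩ := mem_torus_of_mem_curve_sphere (by omega) h₁ hS₁ h₂ hS₂
  have hm₁ := Set.mem_inter h₁ (mem_sphere_zero_iff_norm.2 hS₁)
  have hm₂ := Set.mem_inter h₂ (mem_sphere_zero_iff_norm.2 hS₂)
  have hgS := mapsTo_inv_of_bijOn hbij hg
  have hlip := lipschitzOn_inv_of_bijOn (by linarith) hbij
    (fun v₁ hv₁ v₂ hv₂ => (hbil v₁ hv₁ v₂ hv₂).1) hg
  have hconst : lam + 2 ≤ (lam + 1) * (1 + Real.sqrt 2) := by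
    nlinarith [Real.one_lt_sqrt_two]
  refine le_trans ?_ (mul_le_mul_of_nonneg_right hconst (norm_nonneg _))
  rcases le_total t s with hts | hst
  · exact norm_smul_sub_smul_le_of_torus (by linarith) hx hy hhalf
      (mem_sphere_zero_iff_norm.1 (hgS hm₂)) (hlip hm₁ hm₂) ht0 hts
      (Real.self_le_rpow_of_le_one ht0 ht1 hb1) (Real.rpow_le_rpow ht0 hts (by positivity))
  · rw [norm_sub_rev, norm_sub_rev (pt2 _ _)]
    exact norm_smul_sub_smul_le_of_torus (by linarith) hx.symm hy.symm (hx ▸ hhalf)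
      (mem_sphere_zero_iff_norm.1 (hgS hm₁)) (hlip hm₂ hm₁) hs0 hst
      (Real.self_le_rpow_of_le_one hs0 hs1 hb1) (Real.rpow_le_rpow hs0 hst (by positivity))

/-- With `X = {xⁿ = y^{n+1}} ⊆ ℂ²`, `b = n/(n+1)`, and `f = (f₁,f₂) : S¹ → X ∩ S³` a
λ-bi-Lipschitz homeomorphism with inverse `g`, the map `G(t·x, t^b·y) = t·g(x,y)`
(for `(x,y) ∈ X ∩ S³`, `t ∈ [0,1]`) is Lipschitz with constant `(λ+1)(1+√2)`. -/
theorem stmt_12 (n : ℕ) (hn : 1 < n) (f₁ f₂ : ℂ → ℂ) (g : EuclideanSpace ℂ (Fin 2) → ℂ)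
    (lam : ℝ) (hlam : 1 ≤ lam)
    (hbij : Set.BijOn (fun v => pt2 (f₁ v) (f₂ v)) (Metric.sphere (0:ℂ) 1)
      ({p : EuclideanSpace ℂ (Fin 2) | (p 0) ^ n = (p 1) ^ (n + 1)} ∩
        Metric.sphere (0 : EuclideanSpace ℂ (Fin 2)) 1))
    (hbil : ∀ v₁ ∈ Metric.sphere (0:ℂ) 1, ∀ v₂ ∈ Metric.sphere (0:ℂ) 1,
      lam⁻¹ * ‖v₁ - v₂‖ ≤ ‖pt2 (f₁ v₁) (f₂ v₁) - pt2 (f₁ v₂) (f₂ v₂)‖ ∧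
      ‖pt2 (f₁ v₁) (f₂ v₁) - pt2 (f₁ v₂) (f₂ v₂)‖ ≤ lam * ‖v₁ - v₂‖)
    (hg : ∀ v ∈ Metric.sphere (0:ℂ) 1, g (pt2 (f₁ v) (f₂ v)) = v)
    (hg' : ∀ p ∈ {p : EuclideanSpace ℂ (Fin 2) | (p 0) ^ n = (p 1) ^ (n + 1)} ∩
        Metric.sphere (0 : EuclideanSpace ℂ (Fin 2)) 1, pt2 (f₁ (g p)) (f₂ (g p)) = p) :
    let b : ℝ := n / (n + 1)
    ∀ x₁ y₁ x₂ y₂ : ℂ, ∀ t s : ℝ,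
      pt2 x₁ y₁ ∈ {p : EuclideanSpace ℂ (Fin 2) | (p 0) ^ n = (p 1) ^ (n + 1)} →
      ‖pt2 x₁ y₁‖ = 1 →
      pt2 x₂ y₂ ∈ {p : EuclideanSpace ℂ (Fin 2) | (p 0) ^ n = (p 1) ^ (n + 1)} →
      ‖pt2 x₂ y₂‖ = 1 →
      0 ≤ t → t ≤ 1 → 0 ≤ s → s ≤ 1 →
      ‖t • g (pt2 x₁ y₁) - s • g (pt2 x₂ y₂)‖ ≤
        (lam + 1) * (1 + Real.sqrt 2) *
          ‖pt2 ((t : ℂ) * x₁) (((t ^ b : ℝ) : ℂ) * y₁) -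
            pt2 ((s : ℂ) * x₂) (((s ^ b : ℝ) : ℂ) * y₂)‖ :=
  stmt_12_general n hn f₁ f₂ g lam hlam hbij hbil hg
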